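/- arXiv:1909.05408 — 9 statements merged into one kernel-verified Lean document; each statement's English description precedes it below -/
import Mathlib

section
/- Let C be a finite connected set of positions in the square S_w with holes H = S_w \ C, and let R, R' be two barriers of C (rectangles contained in S_w such that every row and every column of the rectangle contains at least one hole). If R ∩ R' ≠ ∅, then the smallest rectangle R'' containing both R and R' is also a barrier. -/
def Sq (w : ℤ) : Set (ℤ × ℤ) := {p | 0 ≤ p.1 ∧ p.1 ≤ w ∧ 0 ≤ p.2 ∧ p.2 ≤ w}

def dMH (p q : ℤ × ℤ) : ℤ := |p.1 - q.1| + |p.2 - q.2|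

/-- An axis-aligned rectangle in ℤ². -/
def IsRect (R : Set (ℤ × ℤ)) : Prop :=
  ∃ x₀ x₁ y₀ y₁ : ℤ, x₀ ≤ x₁ ∧ y₀ ≤ y₁ ∧
    R = {p : ℤ × ℤ | x₀ ≤ p.1 ∧ p.1 ≤ x₁ ∧ y₀ ≤ p.2 ∧ p.2 ≤ y₁}

/-- A barrier of a configuration `C` in the square `S_w`: a nonempty rectangle
contained in `S_w` each of whose columns and rows contains a hole
(a position of `S_w` not in `C`). -/
def IsBarrier (w : ℤ) (C R : Set (ℤ × ℤ)) : Prop :=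
  R.Nonempty ∧ IsRect R ∧ R ⊆ Sq w ∧
    (∀ c : ℤ, (∃ p ∈ R, p.1 = c) → ∃ p ∈ R, p.1 = c ∧ p ∉ C) ∧
    (∀ r : ℤ, (∃ p ∈ R, p.2 = r) → ∃ p ∈ R, p.2 = r ∧ p ∉ C)

/-- A maximal barrier: a barrier not properly contained in another barrier. -/
def IsMaxBarrier (w : ℤ) (C R : Set (ℤ × ℤ)) : Prop :=
  IsBarrier w C R ∧ ∀ R', IsBarrier w C R' → R ⊆ R' → R' = R

/-- A path of length `n` inside `C` from `u` to `v`. -/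
def IsPathIn (C : Set (ℤ × ℤ)) (n : ℕ) (P : ℕ → ℤ × ℤ) (u v : ℤ × ℤ) : Prop :=
  P 0 = u ∧ P n = v ∧ (∀ i < n, dMH (P i) (P (i + 1)) = 1) ∧ ∀ i ≤ n, P i ∈ C

/-- If two barriers of a finite connected configuration intersect, then the
smallest rectangle containing both is also a barrier. -/
theorem stmt3 (w : ℤ) (C : Set (ℤ × ℤ)) (hC : C ⊆ Sq w) (hfin : C.Finite)
    (hconn : ∀ u ∈ C, ∀ v ∈ C, ∃ (n : ℕ) (P : ℕ → ℤ × ℤ), IsPathIn C n P u v)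
    (R R' : Set (ℤ × ℤ)) (hR : IsBarrier w C R) (hR' : IsBarrier w C R')
    (hmeet : (R ∩ R').Nonempty)
    (R'' : Set (ℤ × ℤ)) (hRect : IsRect R'') (hsub : R ∪ R' ⊆ R'')
    (hmin : ∀ Q, IsRect Q → R ∪ R' ⊆ Q → R'' ⊆ Q) :
    IsBarrier w C R'' := by
  obtain ⟨hRne, ⟨a0, a1, b0, b1, ha, hb, hReq⟩, hRsq, hRcol, hRrow⟩ := hR
  obtain ⟨hR'ne, ⟨c0, c1, d0, d1, hc, hd, hR'eq⟩, hR'sq, hR'col, hR'row⟩ := hR'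
  obtain ⟨q, hqR, hqR'⟩ := hmeet
  rw [hReq] at hqR
  rw [hR'eq] at hqR'
  obtain ⟨hq1, hq2, hq3, hq4⟩ := hqR
  obtain ⟨hq1', hq2', hq3', hq4'⟩ := hqR'
  -- the hull rectangle
  set Q : Set (ℤ × ℤ) :=
    {p : ℤ × ℤ | min a0 c0 ≤ p.1 ∧ p.1 ≤ max a1 c1 ∧ min b0 d0 ≤ p.2 ∧ p.2 ≤ max b1 d1}
    with hQdef
  have hQrect : IsRect Q := ⟨min a0 c0, max a1 c1, min b0 d0, max b1 d1, by omega, by omega, rfl⟩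
  have hsubQ : R ∪ R' ⊆ Q := by
    rintro p (hp | hp)
    · rw [hReq] at hp; simp only [hQdef, Set.mem_setOf_eq] at *; omega
    · rw [hR'eq] at hp; simp only [hQdef, Set.mem_setOf_eq] at *; omega
  have hhull : R'' ⊆ Q := hmin Q hQrect hsubQ
  -- 0 ≤ w
  have hqSq : q ∈ Sq w := hRsq (by rw [hReq]; exact ⟨hq1, hq2, hq3, hq4⟩)
  obtain ⟨hw1, hw2, hw3, hw4⟩ := hqSq
  have hSqRect : IsRect (Sq w) := ⟨0, w, 0, w, by omega, by omega, rfl⟩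
  refine ⟨⟨q, hsub (Or.inl (by rw [hReq]; exact ⟨hq1, hq2, hq3, hq4⟩))⟩, hRect,
    hmin _ hSqRect (Set.union_subset hRsq hR'sq), ?_, ?_⟩
  · rintro cc ⟨p, hpR'', hp1⟩
    have hpQ := hhull hpR''
    simp only [hQdef, Set.mem_setOf_eq] at hpQ
    by_cases hcase : a0 ≤ cc ∧ cc ≤ a1
    · have hmem : ((cc, b0) : ℤ × ℤ) ∈ R := by rw [hReq]; exact ⟨hcase.1, hcase.2, le_refl _, hb⟩
      obtain ⟨p', hp'R, hp'1, hp'C⟩ := hRcol cc ⟨(cc, b0), hmem, rfl⟩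
      exact ⟨p', hsub (Or.inl hp'R), hp'1, hp'C⟩
    · have hcase' : c0 ≤ cc ∧ cc ≤ c1 := by omega
      have hmem : ((cc, d0) : ℤ × ℤ) ∈ R' := by rw [hR'eq]; exact ⟨hcase'.1, hcase'.2, le_refl _, hd⟩
      obtain ⟨p', hp'R, hp'1, hp'C⟩ := hR'col cc ⟨(cc, d0), hmem, rfl⟩
      exact ⟨p', hsub (Or.inr hp'R), hp'1, hp'C⟩
  · rintro rr ⟨p, hpR'', hp2⟩
    have hpQ := hhull hpR''
    simp only [hQdef, Set.mem_setOf_eq] at hpQ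
    by_cases hcase : b0 ≤ rr ∧ rr ≤ b1
    · have hmem : ((a0, rr) : ℤ × ℤ) ∈ R := by rw [hReq]; exact ⟨le_refl _, ha, hcase.1, hcase.2⟩
      obtain ⟨p', hp'R, hp'2, hp'C⟩ := hRrow rr ⟨(a0, rr), hmem, rfl⟩
      exact ⟨p', hsub (Or.inl hp'R), hp'2, hp'C⟩
    · have hcase' : d0 ≤ rr ∧ rr ≤ d1 := by omega
      have hmem : ((c0, rr) : ℤ × ℤ) ∈ R' := by rw [hR'eq]; exact ⟨le_refl _, hc, hcase'.1, hcase'.2⟩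
      obtain ⟨p', hp'R, hp'2, hp'C⟩ := hR'row rr ⟨(c0, rr), hmem, rfl⟩
      exact ⟨p', hsub (Or.inr hp'R), hp'2, hp'C⟩
end

section
/- Let C ⊆ S_w be a configuration with holes S_w \ C, and let R, R' be two barriers of C such that either R ∩ R' ≠ ∅, or some position of R is adjacent to some position of R', or some position of R touches some position of R' with corners (differs by (±1,±1)). Then the smallest rectangle containing R ∪ R' is a barrier of C. -/
/-- If two barriers intersect, are adjacent, or touch with corners, then the
smallest rectangle containing their union is a barrier. -/
theorem stmt4 (w : ℤ) (C : Set (ℤ × ℤ)) (hC : C ⊆ Sq w)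
    (R R' : Set (ℤ × ℤ)) (hR : IsBarrier w C R) (hR' : IsBarrier w C R')
    (hmeet : (R ∩ R').Nonempty ∨
      (∃ p ∈ R, ∃ q ∈ R', dMH p q = 1) ∨
      (∃ p ∈ R, ∃ q ∈ R', |p.1 - q.1| = 1 ∧ |p.2 - q.2| = 1))
    (R'' : Set (ℤ × ℤ)) (hRect : IsRect R'') (hsub : R ∪ R' ⊆ R'')
    (hmin : ∀ Q, IsRect Q → R ∪ R' ⊆ Q → R'' ⊆ Q) :
    IsBarrier w C R'' := by
  obtain ⟨hne, ⟨a₁, b₁, c₁, d₁, hab₁, hcd₁, e₁⟩, hRS, hcol₁, hrow₁⟩ := hR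
  obtain ⟨hne', ⟨a₂, b₂, c₂, d₂, hab₂, hcd₂, e₂⟩, hRS', hcol₂, hrow₂⟩ := hR'
  -- touching points
  have htouch : ∃ p ∈ R, ∃ q ∈ R', |p.1 - q.1| ≤ 1 ∧ |p.2 - q.2| ≤ 1 := by
    rcases hmeet with ⟨p, hp, hp'⟩ | ⟨p, hp, q, hq, h⟩ | ⟨p, hp, q, hq, h1, h2⟩
    · exact ⟨p, hp, p, hp', by simp⟩
    · refine ⟨p, hp, q, hq, ?_, ?_⟩ <;>
      · unfold dMH at h
        have h1 := abs_nonneg (p.1 - q.1)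
        have h2 := abs_nonneg (p.2 - q.2)
        omega
    · exact ⟨p, hp, q, hq, le_of_eq h1, le_of_eq h2⟩
  obtain ⟨p, hp, q, hq, hdx, hdy⟩ := htouch
  rw [e₁] at hp; rw [e₂] at hq
  obtain ⟨hpa, hpb, hpc, hpd⟩ := hp
  obtain ⟨hqa, hqb, hqc, hqd⟩ := hq
  rw [abs_le] at hdx hdy
  -- minimal bounding rectangle Q
  set Q : Set (ℤ × ℤ) :=
    {r | min a₁ a₂ ≤ r.1 ∧ r.1 ≤ max b₁ b₂ ∧ min c₁ c₂ ≤ r.2 ∧ r.2 ≤ max d₁ d₂} with hQ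
  have hQrect : IsRect Q := ⟨_, _, _, _, by omega, by omega, rfl⟩
  have hsubQ : R ∪ R' ⊆ Q := by
    rintro r (hr | hr)
    · rw [e₁] at hr; simp only [hQ, Set.mem_setOf_eq] at hr ⊢; omega
    · rw [e₂] at hr; simp only [hQ, Set.mem_setOf_eq] at hr ⊢; omega
  have hRQ : R'' ⊆ Q := hmin Q hQrect hsubQ
  obtain ⟨r₀, hr₀⟩ := hne
  have hw : 0 ≤ w := by
    have := hRS hr₀
    simp only [Sq, Set.mem_setOf_eq] at this
    omega
  refine ⟨⟨r₀, hsub (Or.inl hr₀)⟩, hRect, ?_, ?_, ?_⟩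
  · -- contained in Sq w
    have hSqRect : IsRect (Sq w) := ⟨0, w, 0, w, hw, hw, rfl⟩
    exact hmin _ hSqRect (Set.union_subset hRS hRS')
  · -- columns
    intro c ⟨r, hr, hrc⟩
    have hrQ := hRQ hr
    simp only [hQ, Set.mem_setOf_eq] at hrQ
    have hcase : (a₁ ≤ c ∧ c ≤ b₁) ∨ (a₂ ≤ c ∧ c ≤ b₂) := by omega
    rcases hcase with ⟨h1, h2⟩ | ⟨h1, h2⟩
    · obtain ⟨s, hs, hsc, hsC⟩ := hcol₁ c ⟨(c, c₁), by rw [e₁]; exact ⟨h1, h2, le_refl _, hcd₁⟩, rfl⟩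
      exact ⟨s, hsub (Or.inl hs), hsc, hsC⟩
    · obtain ⟨s, hs, hsc, hsC⟩ := hcol₂ c ⟨(c, c₂), by rw [e₂]; exact ⟨h1, h2, le_refl _, hcd₂⟩, rfl⟩
      exact ⟨s, hsub (Or.inr hs), hsc, hsC⟩
  · -- rows
    intro y ⟨r, hr, hry⟩
    have hrQ := hRQ hr
    simp only [hQ, Set.mem_setOf_eq] at hrQ
    have hcase : (c₁ ≤ y ∧ y ≤ d₁) ∨ (c₂ ≤ y ∧ y ≤ d₂) := by omega
    rcases hcase with ⟨h1, h2⟩ | ⟨h1, h2⟩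
    · obtain ⟨s, hs, hsy, hsC⟩ := hrow₁ y ⟨(a₁, y), by rw [e₁]; exact ⟨le_refl _, hab₁, h1, h2⟩, rfl⟩
      exact ⟨s, hsub (Or.inl hs), hsy, hsC⟩
    · obtain ⟨s, hs, hsy, hsC⟩ := hrow₂ y ⟨(a₂, y), by rw [e₂]; exact ⟨le_refl _, hab₂, h1, h2⟩, rfl⟩
      exact ⟨s, hsub (Or.inr hs), hsy, hsC⟩
end

section
/- Let C ⊆ S_w be a configuration. If R and R' are two distinct maximal barriers of C, then R ∩ R' = ∅, no position of R is adjacent to a position of R', and no position of R touches a position of R' with corners. -/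
lemma key5 (w : ℤ) (C : Set (ℤ × ℤ)) (R R' : Set (ℤ × ℤ))
    (hR : IsMaxBarrier w C R) (hR' : IsMaxBarrier w C R')
    (p q : ℤ × ℤ) (hp : p ∈ R) (hq : q ∈ R')
    (h1 : |p.1 - q.1| ≤ 1) (h2 : |p.2 - q.2| ≤ 1) : R = R' := by
  obtain ⟨⟨hne, ⟨x₀, x₁, y₀, y₁, hx, hy, hRe⟩, hsub, hcol, hrow⟩, hmax⟩ := hR
  obtain ⟨⟨hne', ⟨a₀, a₁, b₀, b₁, ha, hb, hRe'⟩, hsub', hcol', hrow'⟩, hmax'⟩ := hR'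
  have hpc : x₀ ≤ p.1 ∧ p.1 ≤ x₁ ∧ y₀ ≤ p.2 ∧ p.2 ≤ y₁ := by rw [hRe] at hp; exact hp
  have hqc : a₀ ≤ q.1 ∧ q.1 ≤ a₁ ∧ b₀ ≤ q.2 ∧ q.2 ≤ b₁ := by rw [hRe'] at hq; exact hq
  have h1' : -(1:ℤ) ≤ p.1 - q.1 ∧ p.1 - q.1 ≤ 1 := abs_le.mp h1
  have h2' : -(1:ℤ) ≤ p.2 - q.2 ∧ p.2 - q.2 ≤ 1 := abs_le.mp h2
  set H : Set (ℤ × ℤ) :=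
    {r : ℤ × ℤ | min x₀ a₀ ≤ r.1 ∧ r.1 ≤ max x₁ a₁ ∧ min y₀ b₀ ≤ r.2 ∧ r.2 ≤ max y₁ b₁}
    with hH
  have hRH : R ⊆ H := by
    rw [hRe]; intro r hr
    simp only [hH, Set.mem_setOf_eq] at hr ⊢; omega
  have hRH' : R' ⊆ H := by
    rw [hRe']; intro r hr
    simp only [hH, Set.mem_setOf_eq] at hr ⊢; omega
  have hc1 : (x₀, y₀) ∈ Sq w := hsub (by rw [hRe]; exact ⟨le_refl _, hx, le_refl _, hy⟩)
  have hc2 : (x₁, y₁) ∈ Sq w := hsub (by rw [hRe]; exact ⟨hx, le_refl _, hy, le_refl _⟩)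
  have hc3 : (a₀, b₀) ∈ Sq w := hsub' (by rw [hRe']; exact ⟨le_refl _, ha, le_refl _, hb⟩)
  have hc4 : (a₁, b₁) ∈ Sq w := hsub' (by rw [hRe']; exact ⟨ha, le_refl _, hb, le_refl _⟩)
  simp only [Sq, Set.mem_setOf_eq] at hc1 hc2 hc3 hc4
  have hbar : IsBarrier w C H := by
    refine ⟨⟨p, hRH (by rwa [hRe] at hp ⊢)⟩,
      ⟨min x₀ a₀, max x₁ a₁, min y₀ b₀, max y₁ b₁, by omega, by omega, rfl⟩,
      ?_, ?_, ?_⟩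
    · intro r hr
      simp only [hH, Set.mem_setOf_eq] at hr
      exact ⟨by omega, by omega, by omega, by omega⟩
    · intro c ⟨r, hr, hrc⟩
      simp only [hH, Set.mem_setOf_eq] at hr
      have hcases : (x₀ ≤ c ∧ c ≤ x₁) ∨ (a₀ ≤ c ∧ c ≤ a₁) := by omega
      rcases hcases with hcc | hcc
      · obtain ⟨s, hs, hsc, hsC⟩ := hcol c ⟨(c, y₀), by rw [hRe]; exact ⟨hcc.1, hcc.2, le_refl _, hy⟩, rfl⟩
        exact ⟨s, hRH hs, hsc, hsC⟩
      · obtain ⟨s, hs, hsc, hsC⟩ := hcol' c ⟨(c, b₀), by rw [hRe']; exact ⟨hcc.1, hcc.2, le_refl _, hb⟩, rfl⟩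
        exact ⟨s, hRH' hs, hsc, hsC⟩
    · intro c ⟨r, hr, hrc⟩
      simp only [hH, Set.mem_setOf_eq] at hr
      have hcases : (y₀ ≤ c ∧ c ≤ y₁) ∨ (b₀ ≤ c ∧ c ≤ b₁) := by omega
      rcases hcases with hcc | hcc
      · obtain ⟨s, hs, hsc, hsC⟩ := hrow c ⟨(x₀, c), by rw [hRe]; exact ⟨le_refl _, hx, hcc.1, hcc.2⟩, rfl⟩
        exact ⟨s, hRH hs, hsc, hsC⟩
      · obtain ⟨s, hs, hsc, hsC⟩ := hrow' c ⟨(a₀, c), by rw [hRe']; exact ⟨le_refl _, ha, hcc.1, hcc.2⟩, rfl⟩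
        exact ⟨s, hRH' hs, hsc, hsC⟩
  have e1 := hmax H hbar hRH
  have e2 := hmax' H hbar hRH'
  rw [← e1, ← e2]

/-- Two distinct maximal barriers are disjoint, non-adjacent and do not touch
with corners. -/
theorem stmt5 (w : ℤ) (C : Set (ℤ × ℤ)) (R R' : Set (ℤ × ℤ))
    (hR : IsMaxBarrier w C R) (hR' : IsMaxBarrier w C R') (hne : R ≠ R') :
    R ∩ R' = ∅ ∧
      (¬ ∃ p ∈ R, ∃ q ∈ R', dMH p q = 1) ∧
      (¬ ∃ p ∈ R, ∃ q ∈ R', |p.1 - q.1| = 1 ∧ |p.2 - q.2| = 1) := by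
  refine ⟨?_, ?_, ?_⟩
  · ext p
    simp only [Set.mem_inter_iff, Set.mem_empty_iff_false, iff_false, not_and]
    intro hp hp'
    exact hne (key5 w C R R' hR hR' p p hp hp' (by simp) (by simp))
  · rintro ⟨p, hp, q, hq, hd⟩
    have h1 : |p.1 - q.1| ≤ 1 := by
      have := abs_nonneg (p.2 - q.2); unfold dMH at hd; linarith
    have h2 : |p.2 - q.2| ≤ 1 := by
      have := abs_nonneg (p.1 - q.1); unfold dMH at hd; linarith
    exact hne (key5 w C R R' hR hR' p q hp hq h1 h2)
  · rintro ⟨p, hp, q, hq, h1, h2⟩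
    exact hne (key5 w C R R' hR hR' p q hp hq h1.le h2.le)
end

section
/- Every barrier R of a configuration C ⊆ S_w is contained in exactly one maximal barrier of C. In particular, every hole v of C is contained in exactly one maximal barrier, since {v} is a barrier. -/
lemma barrier_unique_max (w : ℤ) (C : Set (ℤ × ℤ)) (R : Set (ℤ × ℤ))
    (hR : IsBarrier w C R) : ∃! M, IsMaxBarrier w C M ∧ R ⊆ M := by
  classical
  set Bf : Set (Set (ℤ × ℤ)) := {R' | IsBarrier w C R' ∧ R ⊆ R'} with hBf
  have hRB : R ∈ Bf := ⟨hR, subset_rfl⟩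
  set U : Set (ℤ × ℤ) := ⋃₀ Bf with hU
  have hUSq : U ⊆ Sq w := by
    rintro p ⟨R', hR', hp⟩
    exact hR'.1.2.2.1 hp
  obtain ⟨p0, hp0⟩ := hR.1
  have hp0U : p0 ∈ U := ⟨R, hRB, hp0⟩
  obtain ⟨A, ⟨pA, hpAU, hpA1⟩, hAle⟩ :=
    Int.exists_least_of_bdd (P := fun x => ∃ p ∈ U, p.1 = x)
      ⟨0, by rintro z ⟨p, hp, rfl⟩; exact (hUSq hp).1⟩ ⟨p0.1, p0, hp0U, rfl⟩
  obtain ⟨Bx, ⟨pB, hpBU, hpB1⟩, hBge⟩ :=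
    Int.exists_greatest_of_bdd (P := fun x => ∃ p ∈ U, p.1 = x)
      ⟨w, by rintro z ⟨p, hp, rfl⟩; exact (hUSq hp).2.1⟩ ⟨p0.1, p0, hp0U, rfl⟩
  obtain ⟨Cy, ⟨pC, hpCU, hpC2⟩, hCle⟩ :=
    Int.exists_least_of_bdd (P := fun y => ∃ p ∈ U, p.2 = y)
      ⟨0, by rintro z ⟨p, hp, rfl⟩; exact (hUSq hp).2.2.1⟩ ⟨p0.2, p0, hp0U, rfl⟩
  obtain ⟨Dy, ⟨pD, hpDU, hpD2⟩, hDge⟩ :=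
    Int.exists_greatest_of_bdd (P := fun y => ∃ p ∈ U, p.2 = y)
      ⟨w, by rintro z ⟨p, hp, rfl⟩; exact (hUSq hp).2.2.2⟩ ⟨p0.2, p0, hp0U, rfl⟩
  set M : Set (ℤ × ℤ) := {p | A ≤ p.1 ∧ p.1 ≤ Bx ∧ Cy ≤ p.2 ∧ p.2 ≤ Dy} with hM
  have hUM : U ⊆ M := by
    intro p hp
    exact ⟨hAle _ ⟨p, hp, rfl⟩, hBge _ ⟨p, hp, rfl⟩, hCle _ ⟨p, hp, rfl⟩, hDge _ ⟨p, hp, rfl⟩⟩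
  have hRU : R ⊆ U := Set.subset_sUnion_of_mem hRB
  have hRM : R ⊆ M := hRU.trans hUM
  have hp0M : p0 ∈ M := hRM hp0
  obtain ⟨rx0, rx1, ry0, ry1, hrx, hry, hReq⟩ := hR.2.1
  have hcorner1 : (rx0, ry0) ∈ R := by rw [hReq]; exact ⟨le_refl _, hrx, le_refl _, hry⟩
  have hcorner2 : (rx1, ry1) ∈ R := by rw [hReq]; exact ⟨hrx, le_refl _, hry, le_refl _⟩
  -- M is a barrier
  have hMbar : IsBarrier w C M := by
    refine ⟨⟨p0, hp0M⟩, ⟨A, Bx, Cy, Dy, hp0M.1.trans hp0M.2.1,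
      hp0M.2.2.1.trans hp0M.2.2.2, rfl⟩, ?_, ?_, ?_⟩
    · intro p hp
      have h0A : 0 ≤ A := hpA1 ▸ (hUSq hpAU).1
      have hBw : Bx ≤ w := hpB1 ▸ (hUSq hpBU).2.1
      have h0C : 0 ≤ Cy := hpC2 ▸ (hUSq hpCU).2.2.1
      have hDw : Dy ≤ w := hpD2 ▸ (hUSq hpDU).2.2.2
      exact ⟨h0A.trans hp.1, hp.2.1.trans hBw, h0C.trans hp.2.2.1, hp.2.2.2.trans hDw⟩
    · -- columns
      rintro c ⟨p, hpM, rfl⟩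
      rcases le_or_gt p.1 rx1 with hcase | hcase
      · obtain ⟨R1, hR1B, hpAR1⟩ := hpAU
        obtain ⟨a1, b1, c1, d1, hab, hcd, hR1eq⟩ := hR1B.1.2.1
        have hpA' : a1 ≤ pA.1 ∧ pA.1 ≤ b1 ∧ c1 ≤ pA.2 ∧ pA.2 ≤ d1 := by
          rw [hR1eq] at hpAR1; exact hpAR1
        have hb1 : rx1 ≤ b1 := by
          have := hR1B.2 hcorner2
          rw [hR1eq] at this; exact this.2.1
        have ha1 : a1 ≤ pA.1 := hpA'.1
        have hcol : (p.1, pA.2) ∈ R1 := by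
          rw [hR1eq]
          exact ⟨le_trans (hpA1 ▸ ha1) hpM.1, hcase.trans hb1, hpA'.2.2.1, hpA'.2.2.2⟩
        obtain ⟨q, hqR1, hqc, hqC⟩ := hR1B.1.2.2.2.1 p.1 ⟨(p.1, pA.2), hcol, rfl⟩
        exact ⟨q, hUM ⟨R1, hR1B, hqR1⟩, hqc, hqC⟩
      · obtain ⟨R2, hR2B, hpBR2⟩ := hpBU
        obtain ⟨a2, b2, c2, d2, hab, hcd, hR2eq⟩ := hR2B.1.2.1
        have hpB' : a2 ≤ pB.1 ∧ pB.1 ≤ b2 ∧ c2 ≤ pB.2 ∧ pB.2 ≤ d2 := by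
          rw [hR2eq] at hpBR2; exact hpBR2
        have ha2 : a2 ≤ rx0 := by
          have := hR2B.2 hcorner1
          rw [hR2eq] at this; exact this.1
        have hcol : (p.1, pB.2) ∈ R2 := by
          rw [hR2eq]
          refine ⟨le_trans ha2 ?_, le_trans hpM.2.1 (hpB1 ▸ hpB'.2.1), hpB'.2.2.1, hpB'.2.2.2⟩
          exact le_of_lt (lt_of_le_of_lt hrx hcase)
        obtain ⟨q, hqR2, hqc, hqC⟩ := hR2B.1.2.2.2.1 p.1 ⟨(p.1, pB.2), hcol, rfl⟩
        exact ⟨q, hUM ⟨R2, hR2B, hqR2⟩, hqc, hqC⟩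
    · -- rows
      rintro r ⟨p, hpM, rfl⟩
      rcases le_or_gt p.2 ry1 with hcase | hcase
      · obtain ⟨R1, hR1B, hpCR1⟩ := hpCU
        obtain ⟨a1, b1, c1, d1, hab, hcd, hR1eq⟩ := hR1B.1.2.1
        have hpC' : a1 ≤ pC.1 ∧ pC.1 ≤ b1 ∧ c1 ≤ pC.2 ∧ pC.2 ≤ d1 := by
          rw [hR1eq] at hpCR1; exact hpCR1
        have hd1 : ry1 ≤ d1 := by
          have := hR1B.2 hcorner2
          rw [hR1eq] at this; exact this.2.2.2
        have hrow : (pC.1, p.2) ∈ R1 := by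
          rw [hR1eq]
          exact ⟨hpC'.1, hpC'.2.1, le_trans (hpC2 ▸ hpC'.2.2.1) hpM.2.2.1, hcase.trans hd1⟩
        obtain ⟨q, hqR1, hqr, hqC⟩ := hR1B.1.2.2.2.2 p.2 ⟨(pC.1, p.2), hrow, rfl⟩
        exact ⟨q, hUM ⟨R1, hR1B, hqR1⟩, hqr, hqC⟩
      · obtain ⟨R2, hR2B, hpDR2⟩ := hpDU
        obtain ⟨a2, b2, c2, d2, hab, hcd, hR2eq⟩ := hR2B.1.2.1
        have hpD' : a2 ≤ pD.1 ∧ pD.1 ≤ b2 ∧ c2 ≤ pD.2 ∧ pD.2 ≤ d2 := by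
          rw [hR2eq] at hpDR2; exact hpDR2
        have hc2 : c2 ≤ ry0 := by
          have := hR2B.2 hcorner1
          rw [hR2eq] at this; exact this.2.2.1
        have hrow : (pD.1, p.2) ∈ R2 := by
          rw [hR2eq]
          refine ⟨hpD'.1, hpD'.2.1, le_trans hc2 ?_, le_trans hpM.2.2.2 (hpD2 ▸ hpD'.2.2.2)⟩
          exact le_of_lt (lt_of_le_of_lt hry hcase)
        obtain ⟨q, hqR2, hqr, hqC⟩ := hR2B.1.2.2.2.2 p.2 ⟨(pD.1, p.2), hrow, rfl⟩
        exact ⟨q, hUM ⟨R2, hR2B, hqR2⟩, hqr, hqC⟩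
  -- M is maximal
  have hMmax : IsMaxBarrier w C M := by
    refine ⟨hMbar, fun R'' hR'' hMR'' => ?_⟩
    have hR''B : R'' ∈ Bf := ⟨hR'', hRM.trans hMR''⟩
    exact le_antisymm ((Set.subset_sUnion_of_mem hR''B).trans hUM) hMR''
  refine ⟨M, ⟨hMmax, hRM⟩, ?_⟩
  rintro M' ⟨hM', hRM'⟩
  have hM'B : M' ∈ Bf := ⟨hM'.1, hRM'⟩
  exact (hM'.2 M hMbar ((Set.subset_sUnion_of_mem hM'B).trans hUM)).symm

/-- Every barrier is contained in exactly one maximal barrier; in particular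
every hole is contained in exactly one maximal barrier. -/
theorem stmt6 (w : ℤ) (C : Set (ℤ × ℤ)) :
    (∀ R, IsBarrier w C R → ∃! M, IsMaxBarrier w C M ∧ R ⊆ M) ∧
    (∀ v ∈ Sq w, v ∉ C → ∃! M, IsMaxBarrier w C M ∧ v ∈ M) := by
  refine ⟨fun R hR => barrier_unique_max w C R hR, fun v hv hvC => ?_⟩
  have hbar : IsBarrier w C {v} := by
    refine ⟨⟨v, rfl⟩, ⟨v.1, v.1, v.2, v.2, le_refl _, le_refl _, ?_⟩, ?_, ?_, ?_⟩
    · ext p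
      simp only [Set.mem_singleton_iff, Set.mem_setOf_eq]
      constructor
      · rintro rfl; exact ⟨le_refl _, le_refl _, le_refl _, le_refl _⟩
      · rintro ⟨h1, h2, h3, h4⟩
        have := le_antisymm h2 h1
        have := le_antisymm h4 h3
        exact Prod.ext (by omega) (by omega)
    · rintro p rfl; exact hv
    · rintro c ⟨p, hp, rfl⟩
      exact ⟨p, hp, rfl, by rw [Set.mem_singleton_iff] at hp; rw [hp]; exact hvC⟩
    · rintro r ⟨p, hp, rfl⟩
      exact ⟨p, hp, rfl, by rw [Set.mem_singleton_iff] at hp; rw [hp]; exact hvC⟩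
  obtain ⟨M, ⟨hM, hvM⟩, huniq⟩ := barrier_unique_max w C {v} hbar
  exact ⟨M, ⟨hM, hvM rfl⟩, fun M' ⟨hM', hvM'⟩ =>
    huniq M' ⟨hM', Set.singleton_subset_iff.mpr hvM'⟩⟩
end

section
/- Let R be a maximal barrier of a configuration C ⊆ S_w, and let v be a position of S_w outside R that is either adjacent to a position of R or touches a position of R with corners. Then v is a node of C (not a hole), and v is not contained in any maximal barrier of C. -/
lemma hull_absorb (w : ℤ) (C R M : Set (ℤ × ℤ)) (hR : IsMaxBarrier w C R)
    (hM : IsBarrier w C M) (v p : ℤ × ℤ) (hvM : v ∈ M) (hpR : p ∈ R)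
    (hx : |v.1 - p.1| ≤ 1) (hy : |v.2 - p.2| ≤ 1) : M ⊆ R := by
  obtain ⟨⟨hRne, ⟨x₀, x₁, y₀, y₁, hx01, hy01, hReq⟩, hRsq, hRcol, hRrow⟩, hRmax⟩ := hR
  obtain ⟨hMne, ⟨a₀, a₁, b₀, b₁, ha01, hb01, hMeq⟩, hMsq, hMcol, hMrow⟩ := hM
  rw [abs_le] at hx hy
  have hpR' : x₀ ≤ p.1 ∧ p.1 ≤ x₁ ∧ y₀ ≤ p.2 ∧ p.2 ≤ y₁ := by
    rw [hReq] at hpR; exact hpR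
  have hvM' : a₀ ≤ v.1 ∧ v.1 ≤ a₁ ∧ b₀ ≤ v.2 ∧ v.2 ≤ b₁ := by
    rw [hMeq] at hvM; exact hvM
  set H : Set (ℤ × ℤ) := {q : ℤ × ℤ | min x₀ a₀ ≤ q.1 ∧ q.1 ≤ max x₁ a₁ ∧
      min y₀ b₀ ≤ q.2 ∧ q.2 ≤ max y₁ b₁} with hHdef
  have hRH : R ⊆ H := by
    intro q hq; rw [hReq] at hq
    exact ⟨le_trans (min_le_left _ _) hq.1, le_trans hq.2.1 (le_max_left _ _),
      le_trans (min_le_left _ _) hq.2.2.1, le_trans hq.2.2.2 (le_max_left _ _)⟩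
  have hMH : M ⊆ H := by
    intro q hq; rw [hMeq] at hq
    exact ⟨le_trans (min_le_right _ _) hq.1, le_trans hq.2.1 (le_max_right _ _),
      le_trans (min_le_right _ _) hq.2.2.1, le_trans hq.2.2.2 (le_max_right _ _)⟩
  have hHsq : H ⊆ Sq w := by
    have h1 : (x₀, y₀) ∈ Sq w := hRsq (by rw [hReq]; exact ⟨le_refl _, hx01, le_refl _, hy01⟩)
    have h2 : (x₁, y₁) ∈ Sq w := hRsq (by rw [hReq]; exact ⟨hx01, le_refl _, hy01, le_refl _⟩)
    have h3 : (a₀, b₀) ∈ Sq w := hMsq (by rw [hMeq]; exact ⟨le_refl _, ha01, le_refl _, hb01⟩)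
    have h4 : (a₁, b₁) ∈ Sq w := hMsq (by rw [hMeq]; exact ⟨ha01, le_refl _, hb01, le_refl _⟩)
    intro q hq
    simp only [hHdef, Set.mem_setOf_eq] at hq
    exact ⟨le_trans (le_min h1.1 h3.1) hq.1,
      le_trans hq.2.1 (max_le h2.2.1 h4.2.1),
      le_trans (le_min h1.2.2.1 h3.2.2.1) hq.2.2.1,
      le_trans hq.2.2.2 (max_le h2.2.2.2 h4.2.2.2)⟩
  have hHbar : IsBarrier w C H := by
    refine ⟨⟨p, hRH hpR⟩, ⟨min x₀ a₀, max x₁ a₁, min y₀ b₀, max y₁ b₁, by omega, by omega, rfl⟩,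
      hHsq, ?_, ?_⟩
    · intro c hc
      obtain ⟨q, hqH, hqc⟩ := hc
      simp only [hHdef, Set.mem_setOf_eq] at hqH
      by_cases hcase : x₀ ≤ c ∧ c ≤ x₁
      · obtain ⟨q', hq'R, hq'c, hq'C⟩ := hRcol c
          ⟨(c, y₀), by rw [hReq]; exact ⟨hcase.1, hcase.2, le_refl _, hy01⟩, rfl⟩
        exact ⟨q', hRH hq'R, hq'c, hq'C⟩
      · have : a₀ ≤ c ∧ c ≤ a₁ := by omega
        obtain ⟨q', hq'M, hq'c, hq'C⟩ := hMcol c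
          ⟨(c, b₀), by rw [hMeq]; exact ⟨this.1, this.2, le_refl _, hb01⟩, rfl⟩
        exact ⟨q', hMH hq'M, hq'c, hq'C⟩
    · intro r hr
      obtain ⟨q, hqH, hqr⟩ := hr
      simp only [hHdef, Set.mem_setOf_eq] at hqH
      by_cases hcase : y₀ ≤ r ∧ r ≤ y₁
      · obtain ⟨q', hq'R, hq'r, hq'C⟩ := hRrow r
          ⟨(x₀, r), by rw [hReq]; exact ⟨le_refl _, hx01, hcase.1, hcase.2⟩, rfl⟩
        exact ⟨q', hRH hq'R, hq'r, hq'C⟩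
      · have : b₀ ≤ r ∧ r ≤ b₁ := by omega
        obtain ⟨q', hq'M, hq'r, hq'C⟩ := hMrow r
          ⟨(a₀, r), by rw [hMeq]; exact ⟨le_refl _, ha01, this.1, this.2⟩, rfl⟩
        exact ⟨q', hMH hq'M, hq'r, hq'C⟩
  have hHR : H = R := hRmax H hHbar hRH
  exact hHR ▸ hMH

/-- A position just outside a maximal barrier (adjacent or corner-touching) is
a node and belongs to no maximal barrier. -/
theorem stmt8 (w : ℤ) (C : Set (ℤ × ℤ)) (R : Set (ℤ × ℤ))
    (hR : IsMaxBarrier w C R) (v : ℤ × ℤ) (hv : v ∈ Sq w) (hvR : v ∉ R)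
    (htouch : ∃ p ∈ R, dMH v p = 1 ∨ (|v.1 - p.1| = 1 ∧ |v.2 - p.2| = 1)) :
    v ∈ C ∧ ∀ M, IsMaxBarrier w C M → v ∉ M := by
  obtain ⟨p, hpR, hp⟩ := htouch
  have hx : |v.1 - p.1| ≤ 1 := by
    rcases hp with h | h
    · have := abs_nonneg (v.2 - p.2); unfold dMH at h; linarith
    · exact le_of_eq h.1
  have hy : |v.2 - p.2| ≤ 1 := by
    rcases hp with h | h
    · have := abs_nonneg (v.1 - p.1); unfold dMH at h; linarith
    · exact le_of_eq h.2
  constructor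
  · by_contra hvC
    have hsingle : IsBarrier w C {v} := by
      refine ⟨⟨v, rfl⟩, ⟨v.1, v.1, v.2, v.2, le_refl _, le_refl _, ?_⟩,
        by intro q hq; rw [Set.mem_singleton_iff] at hq; subst hq; exact hv, ?_, ?_⟩
      · ext q
        simp only [Set.mem_singleton_iff, Set.mem_setOf_eq]
        constructor
        · rintro rfl; exact ⟨le_refl _, le_refl _, le_refl _, le_refl _⟩
        · intro h; exact Prod.ext (le_antisymm h.2.1 h.1) (le_antisymm h.2.2.2 h.2.2.1)
      · rintro c ⟨q, hq, hqc⟩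
        rw [Set.mem_singleton_iff] at hq
        exact ⟨v, rfl, hq ▸ hqc, hvC⟩
      · rintro r ⟨q, hq, hqr⟩
        rw [Set.mem_singleton_iff] at hq
        exact ⟨v, rfl, hq ▸ hqr, hvC⟩
    exact hvR (hull_absorb w C R {v} hR hsingle v p rfl hpR hx hy rfl)
  · intro M hM hvM
    exact hvR (hull_absorb w C R M hR hM.1 v p hvM hpR hx hy hvM)
end

section
/- Let C ⊆ S_w be a configuration whose boundary positions are all nodes, and suppose the node (x, y) ∈ C with x > 0 and y > 0 is not contained in any maximal barrier of C. Then at least one of the positions (x−1, y) and (x, y−1) is not contained in any maximal barrier of C (and is therefore a node). -/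
def rect (x₀ x₁ y₀ y₁ : ℤ) : Set (ℤ × ℤ) := {p | x₀ ≤ p.1 ∧ p.1 ≤ x₁ ∧ y₀ ≤ p.2 ∧ p.2 ≤ y₁}

@[simp]
lemma mem_rect {x₀ x₁ y₀ y₁ : ℤ} {p : ℤ × ℤ} :
    p ∈ rect x₀ x₁ y₀ y₁ ↔ x₀ ≤ p.1 ∧ p.1 ≤ x₁ ∧ y₀ ≤ p.2 ∧ p.2 ≤ y₁ :=
  Iff.rfl

lemma isRect_iff {R : Set (ℤ × ℤ)} :
    IsRect R ↔ ∃ x₀ x₁ y₀ y₁ : ℤ, x₀ ≤ x₁ ∧ y₀ ≤ y₁ ∧ R = rect x₀ x₁ y₀ y₁ :=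
  Iff.rfl

lemma sq_finite (w : ℤ) : (Sq w).Finite :=
  (Set.finite_Icc ((0 : ℤ), (0 : ℤ)) (w, w)).subset
    fun _ ⟨h₁, h₂, h₃, h₄⟩ => ⟨⟨h₁, h₃⟩, ⟨h₂, h₄⟩⟩

section Barriers

variable {w : ℤ} {C : Set (ℤ × ℤ)}

lemma IsBarrier.exists_isMaxBarrier_superset {R : Set (ℤ × ℤ)} (hR : IsBarrier w C R) :
    ∃ M, IsMaxBarrier w C M ∧ R ⊆ M := by
  have hfin : {R' | IsBarrier w C R' ∧ R ⊆ R'}.Finite :=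
    (sq_finite w).finite_subsets.subset fun _ hR' => hR'.1.2.2.1
  obtain ⟨M, hM, hmax⟩ := hfin.exists_maximalFor id _ ⟨R, hR, subset_rfl⟩
  exact ⟨M, ⟨hM.1, fun R' hR' hMR' =>
    (hmax ⟨hR', hM.2.trans hMR'⟩ hMR').antisymm hMR'⟩, hM.2⟩

lemma isBarrier_singleton {u : ℤ × ℤ} (hu : u ∈ Sq w) (huC : u ∉ C) : IsBarrier w C {u} := by
  refine ⟨⟨u, rfl⟩, isRect_iff.2 ⟨u.1, u.1, u.2, u.2, le_rfl, le_rfl, ?_⟩, by simpa using hu,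
    ?_, ?_⟩
  · ext p
    simp only [Set.mem_singleton_iff, Prod.ext_iff, mem_rect]
    omega
  · rintro c ⟨p, rfl, rfl⟩
    exact ⟨p, rfl, rfl, huC⟩
  · rintro r ⟨p, rfl, rfl⟩
    exact ⟨p, rfl, rfl, huC⟩

lemma mem_of_forall_notMem_isMaxBarrier {u : ℤ × ℤ} (hu : u ∈ Sq w)
    (hfree : ∀ M, IsMaxBarrier w C M → u ∉ M) : u ∈ C := by
  by_contra huC
  obtain ⟨M, hM, huM⟩ := (isBarrier_singleton hu huC).exists_isMaxBarrier_superset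
  exact hfree M hM (huM rfl)

lemma IsBarrier.of_cover {B R₁ R₂ : Set (ℤ × ℤ)} (hB : B.Nonempty) (hBrect : IsRect B)
    (h₁ : IsBarrier w C R₁) (h₂ : IsBarrier w C R₂) (hR₁ : R₁ ⊆ B) (hR₂ : R₂ ⊆ B)
    (hcols : ∀ p ∈ B, ∃ q ∈ R₁ ∪ R₂, q.1 = p.1) (hrows : ∀ p ∈ B, ∃ q ∈ R₁ ∪ R₂, q.2 = p.2) :
    IsBarrier w C B := by
  have hsq : R₁ ∪ R₂ ⊆ Sq w := Set.union_subset h₁.2.2.1 h₂.2.2.1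
  refine ⟨hB, hBrect, fun p hp => ?_, ?_, ?_⟩
  · obtain ⟨q, hq, hqp⟩ := hcols p hp
    obtain ⟨q', hq', hq'p⟩ := hrows p hp
    obtain ⟨-, -, h₃, h₄⟩ := hsq hq'
    obtain ⟨h₁, h₂, -, -⟩ := hsq hq
    exact ⟨hqp ▸ h₁, hqp ▸ h₂, hq'p ▸ h₃, hq'p ▸ h₄⟩
  · rintro c ⟨p, hp, rfl⟩
    obtain ⟨q, hq | hq, hqp⟩ := hcols p hp
    · obtain ⟨h, hh, hhc, hhC⟩ := h₁.2.2.2.1 p.1 ⟨q, hq, hqp⟩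
      exact ⟨h, hR₁ hh, hhc, hhC⟩
    · obtain ⟨h, hh, hhc, hhC⟩ := h₂.2.2.2.1 p.1 ⟨q, hq, hqp⟩
      exact ⟨h, hR₂ hh, hhc, hhC⟩
  · rintro r ⟨p, hp, rfl⟩
    obtain ⟨q, hq | hq, hqp⟩ := hrows p hp
    · obtain ⟨h, hh, hhr, hhC⟩ := h₁.2.2.2.2 p.2 ⟨q, hq, hqp⟩
      exact ⟨h, hR₁ hh, hhr, hhC⟩
    · obtain ⟨h, hh, hhr, hhC⟩ := h₂.2.2.2.2 p.2 ⟨q, hq, hqp⟩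
      exact ⟨h, hR₂ hh, hhr, hhC⟩

lemma isBarrier_rect_hull {a₀ a₁ b₀ b₁ c₀ c₁ d₀ d₁ : ℤ}
    (h₁ : IsBarrier w C (rect a₀ a₁ b₀ b₁)) (h₂ : IsBarrier w C (rect c₀ c₁ d₀ d₁))
    (ha₁ : a₀ ≤ a₁) (hb₁ : b₀ ≤ b₁) (hc₁ : c₀ ≤ c₁) (hd₁ : d₀ ≤ d₁)
    (hac : c₀ ≤ a₁ + 1) (hca : a₀ ≤ c₁ + 1) (hbd : d₀ ≤ b₁ + 1) (hdb : b₀ ≤ d₁ + 1) :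
    IsBarrier w C (rect (min a₀ c₀) (max a₁ c₁) (min b₀ d₀) (max b₁ d₁)) := by
  refine h₁.of_cover ⟨(a₀, b₀), by simp [ha₁, hb₁]⟩
    ⟨_, _, _, _, by omega, by omega, rfl⟩ h₂ ?_ ?_ ?_ ?_
  · intro p hp
    simp only [mem_rect] at hp ⊢
    omega
  · intro p hp
    simp only [mem_rect] at hp ⊢
    omega
  · intro p hp
    simp only [mem_rect] at hp
    by_cases hp₁ : a₀ ≤ p.1 ∧ p.1 ≤ a₁
    · exact ⟨(p.1, b₀), .inl (by simp [hp₁, hb₁]), rfl⟩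
    · exact ⟨(p.1, d₀), .inr (by simp only [mem_rect]; omega), rfl⟩
  · intro p hp
    simp only [mem_rect] at hp
    by_cases hp₂ : b₀ ≤ p.2 ∧ p.2 ≤ b₁
    · exact ⟨(a₀, p.2), .inl (by simp [hp₂, ha₁]), rfl⟩
    · exact ⟨(c₀, p.2), .inr (by simp only [mem_rect]; omega), rfl⟩

lemma exists_isBarrier_mem_of_neighbours {R₁ R₂ : Set (ℤ × ℤ)} {x y : ℤ}
    (h₁ : IsBarrier w C R₁) (h₂ : IsBarrier w C R₂)
    (hleft : (x - 1, y) ∈ R₁) (hbelow : (x, y - 1) ∈ R₂)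
    (hR₁ : (x, y) ∉ R₁) (hR₂ : (x, y) ∉ R₂) :
    ∃ B, IsBarrier w C B ∧ (x, y) ∈ B := by
  obtain ⟨a₀, a₁, b₀, b₁, ha₁, hb₁, rfl⟩ := isRect_iff.1 h₁.2.1
  obtain ⟨c₀, c₁, d₀, d₁, hc₁, hd₁, rfl⟩ := isRect_iff.1 h₂.2.1
  simp only [mem_rect] at hleft hbelow hR₁ hR₂
  refine ⟨_, isBarrier_rect_hull h₁ h₂ ha₁ hb₁ hc₁ hd₁ ?_ ?_ ?_ ?_, ?_⟩
  all_goals first | omega | simp only [mem_rect]; omega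

end Barriers

theorem stmt9_general (w : ℤ) (C : Set (ℤ × ℤ)) (hC : C ⊆ Sq w)
    (x y : ℤ) (hv : (x, y) ∈ C) (hx : 0 < x) (hy : 0 < y)
    (hfree : ∀ M, IsMaxBarrier w C M → (x, y) ∉ M) :
    ∃ u ∈ ({(x - 1, y), (x, y - 1)} : Set (ℤ × ℤ)),
      (∀ M, IsMaxBarrier w C M → u ∉ M) ∧ u ∈ C := by
  obtain ⟨-, hxw, -, hyw⟩ := hC hv
  have hleft : (x - 1, y) ∈ Sq w := ⟨by omega, by omega, by omega, hyw⟩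
  have hbelow : (x, y - 1) ∈ Sq w := ⟨by omega, hxw, by omega, by omega⟩
  suffices (∀ M, IsMaxBarrier w C M → (x - 1, y) ∉ M) ∨
      (∀ M, IsMaxBarrier w C M → (x, y - 1) ∉ M) by
    rcases this with h | h
    · exact ⟨_, .inl rfl, h, mem_of_forall_notMem_isMaxBarrier hleft h⟩
    · exact ⟨_, .inr rfl, h, mem_of_forall_notMem_isMaxBarrier hbelow h⟩
  by_contra! ⟨⟨M₁, hM₁, h₁⟩, ⟨M₂, hM₂, h₂⟩⟩
  obtain ⟨B, hB, hxyB⟩ := exists_isBarrier_mem_of_neighbours hM₁.1 hM₂.1 h₁ h₂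
    (hfree M₁ hM₁) (hfree M₂ hM₂)
  obtain ⟨M, hM, hBM⟩ := hB.exists_isMaxBarrier_superset
  exact hfree M hM (hBM hxyB)

/-- If a node (x, y) with x > 0, y > 0 is not in any maximal barrier, then at
least one of (x-1, y), (x, y-1) is not in any maximal barrier (hence a node). -/
theorem stmt9 (w : ℤ) (C : Set (ℤ × ℤ)) (hC : C ⊆ Sq w)
    (hbd : ∀ p ∈ Sq w, (p.1 = 0 ∨ p.1 = w ∨ p.2 = 0 ∨ p.2 = w) → p ∈ C)
    (x y : ℤ) (hv : (x, y) ∈ C) (hx : 0 < x) (hy : 0 < y)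
    (hfree : ∀ M, IsMaxBarrier w C M → (x, y) ∉ M) :
    ∃ u ∈ ({(x - 1, y), (x, y - 1)} : Set (ℤ × ℤ)),
      (∀ M, IsMaxBarrier w C M → u ∉ M) ∧ u ∈ C :=
  stmt9_general w C hC x y hv hx hy hfree
end

section
/- For every k ≥ 3 there exists a barrier S with at most k holes and a node p in S such that (−W − H − 2 + d₀ + d₁)/2 = k − 2, where W, H are the numbers of columns and rows of S and d₀, d₁ are the lengths of shortest paths in the enlarged rectangle of S from its northwest corner (−1, H) to p and from p to its southeast corner (W, −1). Consequently c_k ≥ k − 2, where c_k is the maximum of (−W − H − 2 + d₀ + d₁)/2 over all barriers S with at most k holes and nodes p ∈ S. -/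
lemma dMH_eq (p q : ℤ × ℤ) :
    dMH p q = ((p.1 - q.1).natAbs : ℤ) + ((p.2 - q.2).natAbs : ℤ) := by
  unfold dMH
  rw [Int.abs_eq_natAbs, Int.abs_eq_natAbs]

lemma lip_bound {C : Set (ℤ × ℤ)} {n : ℕ} {P : ℕ → ℤ × ℤ} {u v : ℤ × ℤ}
    (h : IsPathIn C n P u v) (φ : ℤ × ℤ → ℤ)
    (hφ : ∀ a ∈ C, ∀ b ∈ C, dMH a b = 1 → φ b ≤ φ a + 1) :
    φ v ≤ φ u + n := by
  obtain ⟨h0, hn, hs, hm⟩ := h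
  have key : ∀ j, j ≤ n → φ (P j) ≤ φ (P 0) + j := by
    intro j
    induction j with
    | zero => simp
    | succ i ih =>
      intro hj
      have h1 := hφ _ (hm i (by omega)) _ (hm (i + 1) hj) (hs i (by omega))
      have h2 := ih (by omega)
      push_cast at h2 ⊢
      omega
  have := key n le_rfl
  rw [h0, hn] at this
  exact this

lemma path_ge_dMH {C : Set (ℤ × ℤ)} {n : ℕ} {P : ℕ → ℤ × ℤ} {u v : ℤ × ℤ}
    (h : IsPathIn C n P u v) : dMH u v ≤ n := by
  have := lip_bound h (fun q => dMH u q) (by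
    intro a _ b _ hab
    simp only [dMH_eq] at *
    omega)
  simp only [dMH_eq] at *
  omega

/-! ### The barrier for even k = 2N - 2 -/

def holeCondE (N x y : ℤ) : Prop :=
  (0 ≤ x ∧ x ≤ N - 2 ∧ x + y = N - 2) ∨
  (2 ≤ x ∧ x ≤ N - 1 ∧ x + y = N + 1) ∨ (x = N - 1 ∧ y = 1)

def holesE (N : ℕ) : Finset (ℤ × ℤ) :=
  ((Finset.range (N - 1)).image fun i : ℕ => ((i : ℤ), (N : ℤ) - 2 - i)) ∪
  ((Finset.range (N - 2)).image fun i : ℕ => ((i : ℤ) + 2, (N : ℤ) - 1 - i)) ∪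
  {((N : ℤ) - 1, 1)}

lemma mem_holesE {N : ℕ} (hN : 3 ≤ N) {q : ℤ × ℤ} :
    q ∈ holesE N ↔ holeCondE (N : ℤ) q.1 q.2 := by
  simp only [holesE, holeCondE, Finset.mem_union, Finset.mem_image, Finset.mem_range,
    Finset.mem_singleton, Prod.ext_iff]
  constructor
  · rintro ((⟨i, hi, h1, h2⟩ | ⟨i, hi, h1, h2⟩) | ⟨h1, h2⟩)
    · left; omega
    · right; left; omega
    · right; right; omega
  · rintro (⟨h1, h2, h3⟩ | ⟨h1, h2, h3⟩ | ⟨h1, h2⟩)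
    · exact Or.inl (Or.inl ⟨q.1.toNat, by omega, by omega, by omega⟩)
    · exact Or.inl (Or.inr ⟨(q.1 - 2).toNat, by omega, by omega, by omega⟩)
    · exact Or.inr ⟨by omega, by omega⟩

lemma cardE {N : ℕ} (hN : 3 ≤ N) : (holesE N).card ≤ 2 * N - 2 := by
  have h1 := Finset.card_union_le
    (((Finset.range (N - 1)).image fun i : ℕ => ((i : ℤ), (N : ℤ) - 2 - i)) ∪
      ((Finset.range (N - 2)).image fun i : ℕ => ((i : ℤ) + 2, (N : ℤ) - 1 - i)))
    ({((N : ℤ) - 1, 1)} : Finset (ℤ × ℤ))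
  have h2 := Finset.card_union_le
    ((Finset.range (N - 1)).image fun i : ℕ => ((i : ℤ), (N : ℤ) - 2 - i))
    ((Finset.range (N - 2)).image fun i : ℕ => ((i : ℤ) + 2, (N : ℤ) - 1 - i))
  have h3 := Finset.card_image_le (s := Finset.range (N - 1))
    (f := fun i : ℕ => ((i : ℤ), (N : ℤ) - 2 - i))
  have h4 := Finset.card_image_le (s := Finset.range (N - 2))
    (f := fun i : ℕ => ((i : ℤ) + 2, (N : ℤ) - 1 - i))
  simp only [Finset.card_range, Finset.card_singleton] at *
  unfold holesE
  omega

def phiEf (N x y : ℤ) : ℤ :=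
  if 0 ≤ x ∧ x ≤ N - 2 ∧ N - 1 ≤ x + y ∧ x + y ≤ N ∧ y ≤ N - 1 then N - 3 - x + y
  else if x = N - 1 ∧ y = 0 then 4 * N - 4
  else 3 * N - 5 + x - y

set_option maxHeartbeats 1000000 in
lemma stepE (N x y x' y' : ℤ) (hN : 3 ≤ N)
    (hstep : (x' = x + 1 ∧ y' = y) ∨ (x' = x - 1 ∧ y' = y) ∨
      (x' = x ∧ y' = y + 1) ∨ (x' = x ∧ y' = y - 1))
    (ha : ¬holeCondE N x y) (hb : ¬holeCondE N x' y') :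
    phiEf N x' y' ≤ phiEf N x y + 1 := by
  unfold holeCondE at ha hb
  rcases hstep with ⟨h1, h2⟩ | ⟨h1, h2⟩ | ⟨h1, h2⟩ | ⟨h1, h2⟩ <;> subst h1 <;> subst h2 <;>
    unfold phiEf <;> split_ifs <;> omega

lemma phiE_lip {N : ℕ} (hN : 3 ≤ N) :
    ∀ a ∈ ({q : ℤ × ℤ | -1 ≤ q.1 ∧ q.1 ≤ (N : ℤ) ∧ -1 ≤ q.2 ∧ q.2 ≤ (N : ℤ)} \ ↑(holesE N)),
    ∀ b ∈ ({q : ℤ × ℤ | -1 ≤ q.1 ∧ q.1 ≤ (N : ℤ) ∧ -1 ≤ q.2 ∧ q.2 ≤ (N : ℤ)} \ ↑(holesE N)),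
    dMH a b = 1 → phiEf (N : ℤ) b.1 b.2 ≤ phiEf (N : ℤ) a.1 a.2 + 1 := by
  intro a ha b hb hd
  have haH := ha.2
  have hbH := hb.2
  rw [Finset.mem_coe, mem_holesE hN] at haH hbH
  rw [dMH_eq] at hd
  exact stepE (N : ℤ) a.1 a.2 b.1 b.2 (by omega) (by omega) haH hbH

lemma pathE0 {N : ℕ} (hN : 3 ≤ N) :
    IsPathIn ({q : ℤ × ℤ | -1 ≤ q.1 ∧ q.1 ≤ (N : ℤ) ∧ -1 ≤ q.2 ∧ q.2 ≤ (N : ℤ)} \ ↑(holesE N))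
      (2 * N - 2) (fun i => ((((i + 1) / 2 : ℕ) : ℤ) - 1, (N : ℤ) - ((i / 2 : ℕ) : ℤ)))
      (-1, (N : ℤ)) ((N : ℤ) - 2, 1) := by
  refine ⟨by simp, ?_, ?_, ?_⟩
  · simp only [Prod.mk.injEq]
    omega
  · intro i hi
    rw [dMH_eq]
    simp only
    omega
  · intro i hi
    simp only [Set.mem_diff, Set.mem_setOf_eq, Finset.mem_coe, mem_holesE hN, holeCondE]
    omega

lemma pathE1 {N : ℕ} (hN : 3 ≤ N) :
    IsPathIn ({q : ℤ × ℤ | -1 ≤ q.1 ∧ q.1 ≤ (N : ℤ) ∧ -1 ≤ q.2 ∧ q.2 ≤ (N : ℤ)} \ ↑(holesE N))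
      (4 * N - 4)
      (fun i => if (i : ℤ) ≤ 2 * (N : ℤ) - 5 then
          ((N : ℤ) - 2 - ((i / 2 : ℕ) : ℤ), 1 + (((i + 1) / 2 : ℕ) : ℤ))
        else if (i : ℤ) ≤ 3 * (N : ℤ) - 5 then ((i : ℤ) - 2 * (N : ℤ) + 5, (N : ℤ))
        else ((N : ℤ), 4 * (N : ℤ) - 5 - (i : ℤ)))
      ((N : ℤ) - 2, 1) ((N : ℤ), -1) := by
  refine ⟨?_, ?_, ?_, ?_⟩
  · simp only
    split_ifs <;> simp only [Prod.mk.injEq, true_and, and_true] <;> omega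
  · simp only
    split_ifs <;> simp only [Prod.mk.injEq, true_and, and_true] <;> omega
  · intro i hi
    rw [dMH_eq]
    simp only
    split_ifs <;> simp only <;> omega
  · intro i hi
    simp only [Set.mem_diff, Set.mem_setOf_eq, Finset.mem_coe, mem_holesE hN, holeCondE]
    split_ifs <;> simp only <;> omega

/-! ### The barrier for odd k = 2N - 3 -/

def holeCondO (N x y : ℤ) : Prop :=
  (0 ≤ x ∧ x ≤ N - 3 ∧ x + y = N - 3) ∨
  (2 ≤ x ∧ x ≤ N - 1 ∧ x + y = N + 1) ∨ (x = N - 2 ∧ y = 1)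

def holesO (N : ℕ) : Finset (ℤ × ℤ) :=
  ((Finset.range (N - 2)).image fun i : ℕ => ((i : ℤ), (N : ℤ) - 3 - i)) ∪
  ((Finset.range (N - 2)).image fun i : ℕ => ((i : ℤ) + 2, (N : ℤ) - 1 - i)) ∪
  {((N : ℤ) - 2, 1)}

lemma mem_holesO {N : ℕ} (hN : 3 ≤ N) {q : ℤ × ℤ} :
    q ∈ holesO N ↔ holeCondO (N : ℤ) q.1 q.2 := by
  simp only [holesO, holeCondO, Finset.mem_union, Finset.mem_image, Finset.mem_range,
    Finset.mem_singleton, Prod.ext_iff]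
  constructor
  · rintro ((⟨i, hi, h1, h2⟩ | ⟨i, hi, h1, h2⟩) | ⟨h1, h2⟩)
    · left; omega
    · right; left; omega
    · right; right; omega
  · rintro (⟨h1, h2, h3⟩ | ⟨h1, h2, h3⟩ | ⟨h1, h2⟩)
    · exact Or.inl (Or.inl ⟨q.1.toNat, by omega, by omega, by omega⟩)
    · exact Or.inl (Or.inr ⟨(q.1 - 2).toNat, by omega, by omega, by omega⟩)
    · exact Or.inr ⟨by omega, by omega⟩

lemma cardO {N : ℕ} (hN : 3 ≤ N) : (holesO N).card ≤ 2 * N - 3 := by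
  have h1 := Finset.card_union_le
    (((Finset.range (N - 2)).image fun i : ℕ => ((i : ℤ), (N : ℤ) - 3 - i)) ∪
      ((Finset.range (N - 2)).image fun i : ℕ => ((i : ℤ) + 2, (N : ℤ) - 1 - i)))
    ({((N : ℤ) - 2, 1)} : Finset (ℤ × ℤ))
  have h2 := Finset.card_union_le
    ((Finset.range (N - 2)).image fun i : ℕ => ((i : ℤ), (N : ℤ) - 3 - i))
    ((Finset.range (N - 2)).image fun i : ℕ => ((i : ℤ) + 2, (N : ℤ) - 1 - i))
  have h3 := Finset.card_image_le (s := Finset.range (N - 2))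
    (f := fun i : ℕ => ((i : ℤ), (N : ℤ) - 3 - i))
  have h4 := Finset.card_image_le (s := Finset.range (N - 2))
    (f := fun i : ℕ => ((i : ℤ) + 2, (N : ℤ) - 1 - i))
  simp only [Finset.card_range, Finset.card_singleton] at *
  unfold holesO
  omega

def phiOf (N x y : ℤ) : ℤ :=
  if 0 ≤ x ∧ x ≤ N - 2 ∧ N - 2 ≤ x + y ∧ x + y ≤ N ∧ y ≤ N - 1 ∧ ¬(x = N - 2 ∧ y = 0) then
    N - 2 - x + ((y - 2).natAbs : ℤ)
  else 3 * N - 6 + x - y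

set_option maxHeartbeats 1000000 in
lemma stepO (N x y x' y' : ℤ) (hN : 3 ≤ N)
    (hstep : (x' = x + 1 ∧ y' = y) ∨ (x' = x - 1 ∧ y' = y) ∨
      (x' = x ∧ y' = y + 1) ∨ (x' = x ∧ y' = y - 1))
    (ha : ¬holeCondO N x y) (hb : ¬holeCondO N x' y') :
    phiOf N x' y' ≤ phiOf N x y + 1 := by
  unfold holeCondO at ha hb
  rcases hstep with ⟨h1, h2⟩ | ⟨h1, h2⟩ | ⟨h1, h2⟩ | ⟨h1, h2⟩ <;> subst h1 <;> subst h2 <;>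
    unfold phiOf <;> split_ifs <;> omega

lemma phiO_lip {N : ℕ} (hN : 3 ≤ N) :
    ∀ a ∈ ({q : ℤ × ℤ | -1 ≤ q.1 ∧ q.1 ≤ (N : ℤ) ∧ -1 ≤ q.2 ∧ q.2 ≤ (N : ℤ)} \ ↑(holesO N)),
    ∀ b ∈ ({q : ℤ × ℤ | -1 ≤ q.1 ∧ q.1 ≤ (N : ℤ) ∧ -1 ≤ q.2 ∧ q.2 ≤ (N : ℤ)} \ ↑(holesO N)),
    dMH a b = 1 → phiOf (N : ℤ) b.1 b.2 ≤ phiOf (N : ℤ) a.1 a.2 + 1 := by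
  intro a ha b hb hd
  have haH := ha.2
  have hbH := hb.2
  rw [Finset.mem_coe, mem_holesO hN] at haH hbH
  rw [dMH_eq] at hd
  exact stepO (N : ℤ) a.1 a.2 b.1 b.2 (by omega) (by omega) haH hbH

lemma pathO0 {N : ℕ} (hN : 3 ≤ N) :
    IsPathIn ({q : ℤ × ℤ | -1 ≤ q.1 ∧ q.1 ≤ (N : ℤ) ∧ -1 ≤ q.2 ∧ q.2 ≤ (N : ℤ)} \ ↑(holesO N))
      (2 * N - 3) (fun i => ((((i + 1) / 2 : ℕ) : ℤ) - 1, (N : ℤ) - ((i / 2 : ℕ) : ℤ)))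
      (-1, (N : ℤ)) ((N : ℤ) - 2, 2) := by
  refine ⟨by simp, ?_, ?_, ?_⟩
  · simp only [Prod.mk.injEq]
    omega
  · intro i hi
    rw [dMH_eq]
    simp only
    omega
  · intro i hi
    simp only [Set.mem_diff, Set.mem_setOf_eq, Finset.mem_coe, mem_holesO hN, holeCondO]
    omega

lemma pathO1 {N : ℕ} (hN : 3 ≤ N) :
    IsPathIn ({q : ℤ × ℤ | -1 ≤ q.1 ∧ q.1 ≤ (N : ℤ) ∧ -1 ≤ q.2 ∧ q.2 ≤ (N : ℤ)} \ ↑(holesO N))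
      (4 * N - 5)
      (fun i => if (i : ℤ) ≤ 2 * (N : ℤ) - 6 then
          ((N : ℤ) - 2 - (((i + 1) / 2 : ℕ) : ℤ), 2 + ((i / 2 : ℕ) : ℤ))
        else if (i : ℤ) ≤ 3 * (N : ℤ) - 6 then ((i : ℤ) - 2 * (N : ℤ) + 6, (N : ℤ))
        else ((N : ℤ), 4 * (N : ℤ) - 6 - (i : ℤ)))
      ((N : ℤ) - 2, 2) ((N : ℤ), -1) := by
  refine ⟨?_, ?_, ?_, ?_⟩
  · simp only
    split_ifs <;> simp only [Prod.mk.injEq, true_and, and_true] <;> omega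
  · simp only
    split_ifs <;> simp only [Prod.mk.injEq, true_and, and_true] <;> omega
  · intro i hi
    rw [dMH_eq]
    simp only
    split_ifs <;> simp only <;> omega
  · intro i hi
    simp only [Set.mem_diff, Set.mem_setOf_eq, Finset.mem_coe, mem_holesO hN, holeCondO]
    split_ifs <;> simp only <;> omega

/-- For every k ≥ 3 there is a barrier with at most k holes and a node p in it
whose value (-W - H - 2 + d₀ + d₁)/2 equals k - 2; hence c_k ≥ k - 2. -/
theorem stmt13 (k : ℤ) (hk : 3 ≤ k) :
    ∃ (W H : ℤ) (holes : Finset (ℤ × ℤ)) (p : ℤ × ℤ) (d₀ d₁ : ℕ),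
      1 ≤ W ∧ 1 ≤ H ∧
      (↑holes : Set (ℤ × ℤ)) ⊆
        {q : ℤ × ℤ | 0 ≤ q.1 ∧ q.1 ≤ W - 1 ∧ 0 ≤ q.2 ∧ q.2 ≤ H - 1} ∧
      (∀ c : ℤ, 0 ≤ c → c ≤ W - 1 → ∃ q ∈ holes, q.1 = c) ∧
      (∀ r : ℤ, 0 ≤ r → r ≤ H - 1 → ∃ q ∈ holes, q.2 = r) ∧
      (holes.card : ℤ) ≤ k ∧
      (0 ≤ p.1 ∧ p.1 ≤ W - 1 ∧ 0 ≤ p.2 ∧ p.2 ≤ H - 1) ∧ p ∉ holes ∧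
      IsLeast {n : ℕ | ∃ P : ℕ → ℤ × ℤ,
        IsPathIn ({q : ℤ × ℤ | -1 ≤ q.1 ∧ q.1 ≤ W ∧ -1 ≤ q.2 ∧ q.2 ≤ H} \ ↑holes)
          n P (-1, H) p} d₀ ∧
      IsLeast {n : ℕ | ∃ P : ℕ → ℤ × ℤ,
        IsPathIn ({q : ℤ × ℤ | -1 ≤ q.1 ∧ q.1 ≤ W ∧ -1 ≤ q.2 ∧ q.2 ≤ H} \ ↑holes)
          n P p (W, -1)} d₁ ∧
      (d₀ : ℤ) + d₁ - W - H - 2 = 2 * (k - 2) := by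
  rcases Int.even_or_odd k with ⟨t, ht⟩ | ⟨t, ht⟩
  · -- even case : k = 2N - 2 with N = t + 1
    obtain ⟨N, hNeq⟩ : ∃ N : ℕ, (N : ℤ) = t + 1 := ⟨(t + 1).toNat, by omega⟩
    have hN : 3 ≤ N := by omega
    have hkN : k = 2 * (N : ℤ) - 2 := by omega
    refine ⟨(N : ℤ), (N : ℤ), holesE N, ((N : ℤ) - 2, 1), 2 * N - 2, 4 * N - 4,
      by omega, by omega, ?_, ?_, ?_, ?_, by omega, ?_, ⟨⟨_, pathE0 hN⟩, ?_⟩,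
      ⟨⟨_, pathE1 hN⟩, ?_⟩, by omega⟩
    · intro q hq
      rw [Finset.mem_coe, mem_holesE hN] at hq
      simp only [holeCondE] at hq
      simp only [Set.mem_setOf_eq]
      omega
    · intro c hc0 hc1
      by_cases h : c ≤ (N : ℤ) - 2
      · exact ⟨(c, (N : ℤ) - 2 - c), (mem_holesE hN).2
          (by simp only [holeCondE]; omega), rfl⟩
      · exact ⟨((N : ℤ) - 1, 1), (mem_holesE hN).2
          (Or.inr (Or.inr ⟨rfl, rfl⟩)), by omega⟩
    · intro r hr0 hr1
      by_cases h2 : 2 ≤ r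
      · exact ⟨((N : ℤ) + 1 - r, r), (mem_holesE hN).2
          (by simp only [holeCondE]; omega), rfl⟩
      · by_cases h1 : r = 1
        · exact ⟨((N : ℤ) - 1, 1), (mem_holesE hN).2
            (Or.inr (Or.inr ⟨rfl, rfl⟩)), by omega⟩
        · exact ⟨((N : ℤ) - 2 - r, r), (mem_holesE hN).2
            (by simp only [holeCondE]; omega), rfl⟩
    · have := cardE hN
      omega
    · rw [mem_holesE hN]
      simp only [holeCondE]
      omega
    · intro n hn
      obtain ⟨P, hP⟩ := hn
      have := path_ge_dMH hP
      rw [dMH_eq] at this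
      simp only at this
      omega
    · intro n hn
      obtain ⟨P, hP⟩ := hn
      have := lip_bound hP (fun q => phiEf (N : ℤ) q.1 q.2) (phiE_lip hN)
      simp only at this
      unfold phiEf at this
      split_ifs at this <;> omega
  · -- odd case : k = 2N - 3 with N = t + 2
    obtain ⟨N, hNeq⟩ : ∃ N : ℕ, (N : ℤ) = t + 2 := ⟨(t + 2).toNat, by omega⟩
    have hN : 3 ≤ N := by omega
    have hkN : k = 2 * (N : ℤ) - 3 := by omega
    refine ⟨(N : ℤ), (N : ℤ), holesO N, ((N : ℤ) - 2, 2), 2 * N - 3, 4 * N - 5,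
      by omega, by omega, ?_, ?_, ?_, ?_, by omega, ?_, ⟨⟨_, pathO0 hN⟩, ?_⟩,
      ⟨⟨_, pathO1 hN⟩, ?_⟩, by omega⟩
    · intro q hq
      rw [Finset.mem_coe, mem_holesO hN] at hq
      simp only [holeCondO] at hq
      simp only [Set.mem_setOf_eq]
      omega
    · intro c hc0 hc1
      by_cases h : c ≤ (N : ℤ) - 3
      · exact ⟨(c, (N : ℤ) - 3 - c), (mem_holesO hN).2
          (by simp only [holeCondO]; omega), rfl⟩
      · by_cases h2 : c = (N : ℤ) - 2
        · exact ⟨((N : ℤ) - 2, 1), (mem_holesO hN).2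
            (Or.inr (Or.inr ⟨rfl, rfl⟩)), by omega⟩
        · exact ⟨(c, (N : ℤ) + 1 - c), (mem_holesO hN).2
            (by simp only [holeCondO]; omega), rfl⟩
    · intro r hr0 hr1
      by_cases h2 : 2 ≤ r
      · exact ⟨((N : ℤ) + 1 - r, r), (mem_holesO hN).2
          (by simp only [holeCondO]; omega), rfl⟩
      · by_cases h1 : r = 1
        · exact ⟨((N : ℤ) - 2, 1), (mem_holesO hN).2
            (Or.inr (Or.inr ⟨rfl, rfl⟩)), by omega⟩
        · exact ⟨((N : ℤ) - 3 - r, r), (mem_holesO hN).2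
            (by simp only [holeCondO]; omega), rfl⟩
    · have := cardO hN
      omega
    · rw [mem_holesO hN]
      simp only [holeCondO]
      omega
    · intro n hn
      obtain ⟨P, hP⟩ := hn
      have := path_ge_dMH hP
      rw [dMH_eq] at this
      simp only at this
      omega
    · intro n hn
      obtain ⟨P, hP⟩ := hn
      have := lip_bound hP (fun q => phiOf (N : ℤ) q.1 q.2) (phiO_lip hN)
      simp only at this
      unfold phiOf at this
      split_ifs at this <;> omega
end

section
/- Let w ≥ 0 and define U ∪ V = {(x,y) ∈ S_w | 0 ≤ x ≤ ⌊w/2⌋ and 0 ≤ y ≤ ⌊w/2⌋}. Then U ∪ V = {v ∈ S_w | for all v' ∈ S_w, d_MH((0,0), v) + d_MH(v, v') ≤ 2w}. -/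
/-- The explicit sub-square {(x,y) ∈ S_w | x ≤ ⌊w/2⌋, y ≤ ⌊w/2⌋} equals the set
of v ∈ S_w such that d_MH((0,0),v) + d_MH(v,v') ≤ 2w for all v' ∈ S_w. -/
theorem stmt18 (w : ℤ) (hw : 0 ≤ w) :
    {p : ℤ × ℤ | p ∈ Sq w ∧ p.1 ≤ w / 2 ∧ p.2 ≤ w / 2}
      = {v : ℤ × ℤ | v ∈ Sq w ∧
          ∀ v' ∈ Sq w, dMH (0, 0) v + dMH v v' ≤ 2 * w} := by
  ext ⟨x, y⟩
  simp only [Set.mem_setOf_eq, Sq, dMH]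
  constructor
  · rintro ⟨⟨hx0, hxw, hy0, hyw⟩, hx, hy⟩
    refine ⟨⟨hx0, hxw, hy0, hyw⟩, ?_⟩
    rintro ⟨a, b⟩ ⟨ha0, haw, hb0, hbw⟩
    simp only
    rcases abs_cases (x - a) with ⟨h1, _⟩ | ⟨h1, _⟩ <;>
    rcases abs_cases (y - b) with ⟨h2, _⟩ | ⟨h2, _⟩ <;>
    rcases abs_cases (0 - x : ℤ) with ⟨h3, _⟩ | ⟨h3, _⟩ <;>
    rcases abs_cases (0 - y : ℤ) with ⟨h4, _⟩ | ⟨h4, _⟩ <;>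
    omega
  · rintro ⟨⟨hx0, hxw, hy0, hyw⟩, h⟩
    refine ⟨⟨hx0, hxw, hy0, hyw⟩, ?_, ?_⟩
    · have := h (0, w) ⟨le_refl 0, hw, hw, le_refl w⟩
      simp only at this
      rcases abs_cases (x - 0 : ℤ) with ⟨h1, _⟩ | ⟨h1, _⟩ <;>
      rcases abs_cases (y - w) with ⟨h2, _⟩ | ⟨h2, _⟩ <;>
      rcases abs_cases (0 - x : ℤ) with ⟨h3, _⟩ | ⟨h3, _⟩ <;>
      rcases abs_cases (0 - y : ℤ) with ⟨h4, _⟩ | ⟨h4, _⟩ <;>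
      omega
    · have := h (w, 0) ⟨hw, le_refl w, le_refl 0, hw⟩
      simp only at this
      rcases abs_cases (x - w) with ⟨h1, _⟩ | ⟨h1, _⟩ <;>
      rcases abs_cases (y - 0 : ℤ) with ⟨h2, _⟩ | ⟨h2, _⟩ <;>
      rcases abs_cases (0 - x : ℤ) with ⟨h3, _⟩ | ⟨h3, _⟩ <;>
      rcases abs_cases (0 - y : ℤ) with ⟨h4, _⟩ | ⟨h4, _⟩ <;>
      omega
end

section
/- Let w be an odd positive integer and define T = {(x,y) ∈ S_w | 0 ≤ x ≤ ⌊w/2⌋ + 1 and 0 ≤ y ≤ ⌊w/2⌋ + 1}. Then T equals the set of v ∈ S_w such that for every v' ∈ S_w there exists v'' ∈ S_w with d_MH(v, v'') ≤ 1 and d_MH((0,0), v'') + d_MH(v'', v') ≤ 2w. -/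
/-- For odd positive w, the square {(x,y) ∈ S_w | x ≤ ⌊w/2⌋+1, y ≤ ⌊w/2⌋+1}
equals the set of v ∈ S_w such that for every v' ∈ S_w there is v'' ∈ S_w with
d_MH(v,v'') ≤ 1 and d_MH((0,0),v'') + d_MH(v'',v') ≤ 2w. -/
theorem stmt19 (w : ℤ) (hodd : Odd w) (hw : 0 < w) :
    {p : ℤ × ℤ | p ∈ Sq w ∧ p.1 ≤ w / 2 + 1 ∧ p.2 ≤ w / 2 + 1}
      = {v : ℤ × ℤ | v ∈ Sq w ∧ ∀ v' ∈ Sq w, ∃ v'' ∈ Sq w,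
          dMH v v'' ≤ 1 ∧ dMH (0, 0) v'' + dMH v'' v' ≤ 2 * w} := by
  obtain ⟨k, hk⟩ := hodd
  have hk' : w / 2 = k := by omega
  ext ⟨x, y⟩
  simp only [Set.mem_setOf_eq, Sq, dMH, hk']
  constructor
  · rintro ⟨⟨hx0, hxw, hy0, hyw⟩, hx, hy⟩
    refine ⟨⟨hx0, hxw, hy0, hyw⟩, ?_⟩
    rintro ⟨x', y'⟩ ⟨hx'0, hx'w, hy'0, hy'w⟩
    by_cases h1 : 2 * x ≤ w + x'
    · by_cases h2 : 2 * y ≤ w + y'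
      · refine ⟨(x, y), ⟨hx0, hxw, hy0, hyw⟩, ?_, ?_⟩ <;>
          simp only [Int.abs_eq_natAbs] <;> omega
      · refine ⟨(x, y - 1), ⟨by omega, by omega, by omega, by omega⟩, ?_, ?_⟩ <;>
          simp only [Int.abs_eq_natAbs] <;> omega
    · refine ⟨(x - 1, y), ⟨by omega, by omega, by omega, by omega⟩, ?_, ?_⟩ <;>
        simp only [Int.abs_eq_natAbs] <;> omega
  · rintro ⟨⟨hx0, hxw, hy0, hyw⟩, h⟩
    refine ⟨⟨hx0, hxw, hy0, hyw⟩, ?_, ?_⟩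
    · obtain ⟨⟨a, b⟩, ⟨ha0, haw, hb0, hbw⟩, h1, h2⟩ :=
        h (0, w) ⟨le_refl 0, by omega, by omega, le_refl w⟩
      simp only [Int.abs_eq_natAbs] at h1 h2
      omega
    · obtain ⟨⟨a, b⟩, ⟨ha0, haw, hb0, hbw⟩, h1, h2⟩ :=
        h (w, 0) ⟨by omega, le_refl w, le_refl 0, by omega⟩
      simp only [Int.abs_eq_natAbs] at h1 h2
      omega
end
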